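/- arXiv:1702.01666 — 5 statements merged into one kernel-verified Lean document; each statement's English description precedes it below -/
import Mathlib

section
/- For every integer α ≥ 2, every constant c > 0 and every δ ∈ (0,1/2), there exists a constant C > 0 (depending only on α, c, δ) such that for every alphabet size k ≥ 2, every distribution q on A = {1,…,k} satisfying min_i q_i ≥ k^{−c}, and every n ≥ k^C, there exists a function f : A^n → ℝ that is a (δ, 0.3)-estimator of D_α(·‖q) on the set of all distributions on A. -/
open Finset Real

/-- `p` is a probability distribution on `Fin k`. -/
def IsDist {k : ℕ} (p : Fin k → ℝ) : Prop := (∀ i, 0 ≤ p i) ∧ ∑ i, p i = 1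

/-- Rényi divergence of order `α` of `p` from `q`. -/
noncomputable def renyiDiv {k : ℕ} (α : ℝ) (p q : Fin k → ℝ) : ℝ :=
  (1 / (α - 1)) * Real.log (∑ i, p i ^ α * q i ^ (1 - α))

/-- Probability, under `n` i.i.d. samples from `p`, of the event `E`. -/
noncomputable def iidProb {k : ℕ} (n : ℕ) (p : Fin k → ℝ)
    (E : Set (Fin n → Fin k)) : ℝ :=
  ∑ x : Fin n → Fin k, Set.indicator E (fun y => ∏ j, p (y j)) x

/-- `f` is a `(δ, ε)`-estimator of the Rényi `α`-divergence to `q`,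
on the set of all distributions on `Fin k`. -/
def IsEstimator {k : ℕ} (n : ℕ) (α δ ε : ℝ) (q : Fin k → ℝ)
    (f : (Fin n → Fin k) → ℝ) : Prop :=
  ∀ p : Fin k → ℝ, IsDist p →
    iidProb n p {x | δ < |f x - renyiDiv α p q|} < ε

/-!
The estimator is the plug-in one, `x ↦ D_α(p̂_x ‖ q)` with `p̂_x` the empirical distribution.
If every `q i ^ (1 - α) ≤ M`, then `p ↦ D_α(p ‖ q)` is `α M`-Lipschitz for the `ℓ¹` distance:
by Jensen the sums `∑ p_i^α q_i^(1-α)` are at least `1`, where `log` is `1`-Lipschitz, and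
`t ↦ t^α` is `α`-Lipschitz on `[0, 1]`. Since `E ‖p̂ - p‖₂² ≤ 1/n`, Cauchy–Schwarz and Markov bound
the failure probability by `k (α M / δ)² / n`, which is at most `1/4` as soon as
`n ≥ 4 k (α M / δ)²`; for `M = k^(c(α-1))` this is implied by `n ≥ k^C`.
-/

section IidExpectation

variable {k n : ℕ} (p : Fin k → ℝ)

noncomputable def iidExp (n : ℕ) (p : Fin k → ℝ) (g : (Fin n → Fin k) → ℝ) : ℝ :=
  ∑ x : Fin n → Fin k, (∏ j, p (x j)) * g x

lemma iidExp_sum {ι : Type*} (s : Finset ι) (G : ι → (Fin n → Fin k) → ℝ) :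
    iidExp n p (fun x => ∑ i ∈ s, G i x) = ∑ i ∈ s, iidExp n p (G i) := by
  simp only [iidExp, Finset.mul_sum]
  exact Finset.sum_comm

lemma iidExp_div (g : (Fin n → Fin k) → ℝ) (c : ℝ) :
    iidExp n p (fun x => g x / c) = iidExp n p g / c := by
  simp only [iidExp, Finset.sum_div, mul_div_assoc]

lemma iidExp_prod (F : Fin n → Fin k → ℝ) :
    iidExp n p (fun x => ∏ j, F j (x j)) = ∏ j, ∑ a, p a * F j a := by
  simp only [iidExp, ← Finset.prod_mul_distrib]
  exact (Fintype.prod_sum fun j a => p a * F j a).symm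

lemma iidExp_comp_eval (hp : ∑ a, p a = 1) (j : Fin n) (g : Fin k → ℝ) :
    iidExp n p (fun x => g (x j)) = ∑ a, p a * g a := by
  have h := iidExp_prod p (fun m a => if m = j then g a else 1)
  have hF : ∀ m, ∑ a, p a * (if m = j then g a else 1) = if m = j then ∑ a, p a * g a else 1 := by
    intro m
    split_ifs <;> simp [hp]
  simpa only [Finset.prod_ite_eq', Finset.mem_univ, if_true, hF] using h

lemma iidExp_comp_eval_mul_comp_eval (hp : ∑ a, p a = 1) {j j' : Fin n} (hjj' : j ≠ j')
    (g h : Fin k → ℝ) :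
    iidExp n p (fun x => g (x j) * h (x j')) = (∑ a, p a * g a) * ∑ a, p a * h a := by
  have H := iidExp_prod p (fun m a => (if m = j then g a else 1) * (if m = j' then h a else 1))
  have hF : ∀ m, ∑ a, p a * ((if m = j then g a else 1) * (if m = j' then h a else 1)) =
      (if m = j then ∑ a, p a * g a else 1) * (if m = j' then ∑ a, p a * h a else 1) := by
    intro m
    by_cases hm : m = j
    · subst hm; simp [hjj']
    · split_ifs <;> simp [hp]
  simpa only [Finset.prod_mul_distrib, Finset.prod_ite_eq', Finset.mem_univ, if_true, hF] using H

lemma iidExp_sq_sum_comp_eval (hp : ∑ a, p a = 1) (g : Fin k → ℝ) (hg : ∑ a, p a * g a = 0) :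
    iidExp n p (fun x => (∑ j, g (x j)) ^ 2) = n * ∑ a, p a * g a ^ 2 := by
  have hpair : ∀ j j' : Fin n, iidExp n p (fun x => g (x j) * g (x j')) =
      if j = j' then ∑ a, p a * g a ^ 2 else 0 := by
    intro j j'
    split_ifs with hjj'
    · subst hjj'; simpa only [sq] using iidExp_comp_eval p hp j (fun a => g a * g a)
    · rw [iidExp_comp_eval_mul_comp_eval p hp hjj', hg, zero_mul]
  simp only [sq, Finset.sum_mul_sum, iidExp_sum, hpair, Finset.sum_ite_eq, Finset.mem_univ,
    if_true, Finset.sum_const, Finset.card_univ, Fintype.card_fin, nsmul_eq_mul]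

lemma iidProb_le_iidExp_div (hp : ∀ a, 0 ≤ p a) {E : Set (Fin n → Fin k)}
    {T : (Fin n → Fin k) → ℝ} (hT : ∀ x, 0 ≤ T x) {s : ℝ} (hs : 0 < s)
    (hE : ∀ x ∈ E, s ≤ T x) : iidProb n p E ≤ iidExp n p T / s := by
  rw [le_div_iff₀ hs, iidExp, iidProb, Finset.sum_mul]
  refine Finset.sum_le_sum fun x _ => ?_
  have hw : 0 ≤ ∏ j, p (x j) := Finset.prod_nonneg fun j _ => hp _
  by_cases hx : x ∈ E
  · rw [Set.indicator_of_mem hx]; gcongr; exact hE x hx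
  · rw [Set.indicator_of_notMem hx, zero_mul]; exact mul_nonneg hw (hT x)

end IidExpectation

section Empirical

variable {k n : ℕ}

noncomputable def empirical (x : Fin n → Fin k) (i : Fin k) : ℝ :=
  (#{j | x j = i} : ℝ) / n

lemma isDist_empirical (hn : n ≠ 0) (x : Fin n → Fin k) : IsDist (empirical x) := by
  refine ⟨fun i => by unfold empirical; positivity, ?_⟩
  have hcard : ∑ i, (#{j | x j = i} : ℝ) = n := by
    rw [← Nat.cast_sum, ← Finset.card_eq_sum_card_fiberwise fun j _ => Finset.mem_univ (x j),
      Finset.card_univ, Fintype.card_fin]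
  simp only [empirical, ← Finset.sum_div, hcard]
  field_simp

lemma empirical_sub_eq (hn : n ≠ 0) (p : Fin k → ℝ) (x : Fin n → Fin k) (i : Fin k) :
    empirical x i - p i = (∑ j, ((if x j = i then 1 else 0) - p i)) / n := by
  rw [Finset.sum_sub_distrib, Finset.sum_boole, Finset.sum_const, Finset.card_univ,
    Fintype.card_fin, nsmul_eq_mul, empirical]
  field_simp

lemma iidExp_sum_sq_empirical_sub_le (hn : n ≠ 0) {p : Fin k → ℝ} (hp : IsDist p) :
    iidExp n p (fun x => ∑ i, (empirical x i - p i) ^ 2) ≤ 1 / n := by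
  have hvar : ∀ i, ∑ a, p a * ((if a = i then 1 else 0) - p i) ^ 2 ≤ p i := by
    intro i
    have hpi : ∀ a, p a * ((if a = i then 1 else 0) - p i) ^ 2 =
        (if a = i then p i * (1 - 2 * p i) else 0) + p i ^ 2 * p a := by
      intro a
      split_ifs with ha
      · subst ha; ring
      · ring
    simp only [hpi, Finset.sum_add_distrib, Finset.sum_ite_eq', Finset.mem_univ, if_true,
      ← Finset.mul_sum, hp.2]
    nlinarith [hp.1 i]
  have hmean : ∀ i, ∑ a, p a * ((if a = i then 1 else 0) - p i) = 0 := by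
    intro i
    simp [mul_sub, Finset.sum_sub_distrib, ← Finset.sum_mul, hp.2]
  calc iidExp n p (fun x => ∑ i, (empirical x i - p i) ^ 2)
      = ∑ i, (n : ℝ) * (∑ a, p a * ((if a = i then 1 else 0) - p i) ^ 2) / (n : ℝ) ^ 2 := by
        simp only [empirical_sub_eq hn, div_pow, iidExp_sum, iidExp_div,
          iidExp_sq_sum_comp_eval p hp.2 _ (hmean _)]
    _ ≤ ∑ i, (n : ℝ) * p i / (n : ℝ) ^ 2 := by gcongr with i; exact hvar i
    _ = 1 / n := by rw [← Finset.sum_div, ← Finset.mul_sum, hp.2]; field_simp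

end Empirical

section RenyiContinuity

variable {k : ℕ} {q r s : Fin k → ℝ}

lemma abs_log_sub_log_le_abs_sub {a b : ℝ} (ha : 1 ≤ a) (hb : 1 ≤ b) :
    |Real.log a - Real.log b| ≤ |a - b| := by
  wlog hba : b ≤ a generalizing a b
  · rw [abs_sub_comm, abs_sub_comm a]; exact this hb ha (le_of_not_ge hba)
  have hb0 : 0 < b := by linarith
  rw [abs_of_nonneg (sub_nonneg.2 (Real.log_le_log hb0 hba)), abs_of_nonneg (sub_nonneg.2 hba),
    ← Real.log_div (by positivity) hb0.ne']
  calc Real.log (a / b) ≤ a / b - 1 := Real.log_le_sub_one_of_pos (by positivity)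
    _ = (a - b) / b := by field_simp
    _ ≤ a - b := div_le_self (sub_nonneg.2 hba) hb

/-- Jensen's inequality for `t ↦ t ^ α` applied to the likelihood ratio `r / q`. -/
lemma one_le_sum_rpow_mul_rpow {α : ℝ} (hα : 1 ≤ α) (hq0 : ∀ i, 0 < q i) (hq1 : ∑ i, q i = 1)
    (hr : IsDist r) : 1 ≤ ∑ i, r i ^ α * q i ^ (1 - α) := by
  have hterm : ∀ i, r i ^ α * q i ^ (1 - α) = q i * (r i / q i) ^ α := by
    intro i
    rw [Real.div_rpow (hr.1 i) (hq0 i).le, Real.rpow_sub (hq0 i), Real.rpow_one]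
    field_simp
  have hmean : ∑ i, q i * (r i / q i) = 1 := by
    simp only [mul_div_cancel₀ _ (hq0 _).ne', hr.2]
  have hjensen := (convexOn_rpow hα).map_sum_le (t := Finset.univ) (fun i _ => (hq0 i).le) hq1
    (fun i _ => Set.mem_Ici.2 (div_nonneg (hr.1 i) (hq0 i).le))
  simp only [smul_eq_mul, hmean, Real.one_rpow] at hjensen
  simpa only [hterm] using hjensen

lemma abs_sum_pow_mul_sub_le (α : ℕ) {M : ℝ} (hq0 : ∀ i, 0 < q i)
    (hM : ∀ i, q i ^ (1 - (α : ℝ)) ≤ M) (hr0 : ∀ i, 0 ≤ r i) (hr1 : ∀ i, r i ≤ 1)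
    (hs0 : ∀ i, 0 ≤ s i) (hs1 : ∀ i, s i ≤ 1) :
    |∑ i, r i ^ α * q i ^ (1 - (α : ℝ)) - ∑ i, s i ^ α * q i ^ (1 - (α : ℝ))|
      ≤ α * M * ∑ i, |r i - s i| := by
  rw [← Finset.sum_sub_distrib, Finset.mul_sum]
  refine (Finset.abs_sum_le_sum_abs _ _).trans (Finset.sum_le_sum fun i _ => ?_)
  have hpow : |r i ^ α - s i ^ α| ≤ α * |r i - s i| := by
    have hmax : max |r i| |s i| ^ (α - 1) ≤ 1 :=
      pow_le_one₀ (by positivity) (max_le (abs_le.2 ⟨by linarith [hr0 i], hr1 i⟩)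
        (abs_le.2 ⟨by linarith [hs0 i], hs1 i⟩))
    calc |r i ^ α - s i ^ α| ≤ |r i - s i| * α * max |r i| |s i| ^ (α - 1) :=
          abs_pow_sub_pow_le _ _ _
      _ ≤ |r i - s i| * α * 1 := by gcongr
      _ = α * |r i - s i| := by ring
  have hw : 0 ≤ q i ^ (1 - (α : ℝ)) := (Real.rpow_pos_of_pos (hq0 i) _).le
  calc |r i ^ α * q i ^ (1 - (α : ℝ)) - s i ^ α * q i ^ (1 - (α : ℝ))|
      = |r i ^ α - s i ^ α| * q i ^ (1 - (α : ℝ)) := by rw [← sub_mul, abs_mul, abs_of_nonneg hw]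
    _ ≤ α * |r i - s i| * M := mul_le_mul hpow (hM i) hw (by positivity)
    _ = α * M * |r i - s i| := by ring

lemma abs_renyiDiv_sub_le {α : ℕ} (hα : 2 ≤ α) {M : ℝ} (hq0 : ∀ i, 0 < q i)
    (hq1 : ∑ i, q i = 1) (hM : ∀ i, q i ^ (1 - (α : ℝ)) ≤ M) (hr : IsDist r) (hs : IsDist s) :
    |renyiDiv α r q - renyiDiv α s q| ≤ α * M * ∑ i, |r i - s i| := by
  have hα' : (2 : ℝ) ≤ α := by exact_mod_cast hα
  have hle_one : ∀ {u : Fin k → ℝ}, IsDist u → ∀ i, u i ≤ 1 := fun hu i =>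
    hu.2 ▸ Finset.single_le_sum (fun j _ => hu.1 j) (Finset.mem_univ i)
  have hfrac : |1 / ((α : ℝ) - 1)| ≤ 1 := by
    rw [abs_of_pos (by bound), div_le_one (by linarith)]; linarith
  have hsum := abs_sum_pow_mul_sub_le α hq0 hM hr.1 (hle_one hr) hs.1 (hle_one hs)
  simp only [← Real.rpow_natCast] at hsum
  have hα1 : (1 : ℝ) ≤ α := by linarith
  have hlog := abs_log_sub_log_le_abs_sub (one_le_sum_rpow_mul_rpow hα1 hq0 hq1 hr)
    (one_le_sum_rpow_mul_rpow hα1 hq0 hq1 hs)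
  unfold renyiDiv
  rw [← mul_sub, abs_mul]
  exact (mul_le_of_le_one_left (abs_nonneg _) hfrac).trans (hlog.trans hsum)

end RenyiContinuity

theorem isEstimator_renyiDiv_empirical {k n α : ℕ} (hα : 2 ≤ α) {q : Fin k → ℝ}
    (hq0 : ∀ i, 0 < q i) (hq1 : ∑ i, q i = 1) {M δ : ℝ} (hM : ∀ i, q i ^ (1 - (α : ℝ)) ≤ M)
    (hδ : 0 < δ) (hn : 4 * k * (α * M / δ) ^ 2 ≤ n) :
    IsEstimator n α δ 0.3 q (fun x => renyiDiv α (empirical x) q) := by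
  intro p hp
  have hk : 0 < k := Nat.pos_of_ne_zero fun hk => by subst hk; simp [IsDist] at hp
  have hM0 : 0 < M := (Real.rpow_pos_of_pos (hq0 ⟨0, hk⟩) _).trans_le (hM _)
  have hα0 : (0 : ℝ) < α := by positivity
  set s := (δ / (α * M)) ^ 2 / k with hs
  have hs0 : 0 < s := by positivity
  have hn0 : (0 : ℝ) < n := lt_of_lt_of_le (by positivity) hn
  have hn0' : n ≠ 0 := by exact_mod_cast hn0.ne'
  have hbad : ∀ x ∈ {x : Fin n → Fin k | δ < |renyiDiv α (empirical x) q - renyiDiv α p q|},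
      s ≤ ∑ i, (empirical x i - p i) ^ 2 := by
    intro x hx
    have hlip := abs_renyiDiv_sub_le hα hq0 hq1 hM (isDist_empirical hn0' x) hp
    have hcs := sq_sum_le_card_mul_sum_sq (s := Finset.univ) (f := fun i => |empirical x i - p i|)
    simp only [sq_abs, Finset.card_univ, Fintype.card_fin] at hcs
    rw [hs, div_le_iff₀' (by positivity)]
    have hδS : δ / (α * M) ≤ ∑ i, |empirical x i - p i| := by
      rw [div_le_iff₀' (by positivity)]; exact (lt_of_lt_of_le hx hlip).le
    exact (pow_le_pow_left₀ (by positivity) hδS 2).trans hcs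
  calc iidProb n p _
      ≤ iidExp n p (fun x => ∑ i, (empirical x i - p i) ^ 2) / s :=
        iidProb_le_iidExp_div p hp.1 (fun x => by positivity) hs0 hbad
    _ ≤ 1 / n / s := by gcongr; exact iidExp_sum_sq_empirical_sub_le hn0' hp
    _ ≤ 1 / 4 := by
        rw [hs, div_div, div_le_div_iff₀ (by positivity) (by norm_num)]
        rw [div_pow, ← mul_div_assoc, div_le_iff₀ (by positivity)] at hn
        field_simp
        linarith
    _ < 0.3 := by norm_num

lemma mul_rpow_le_rpow_add_logb {A x : ℝ} (hA : 1 ≤ A) (hx : 2 ≤ x) (B : ℝ) :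
    A * x ^ B ≤ x ^ (B + Real.logb 2 A) := by
  have hL : 0 ≤ Real.logb 2 A := Real.logb_nonneg one_lt_two hA
  rw [Real.rpow_add (by linarith), mul_comm]
  gcongr
  calc A = 2 ^ Real.logb 2 A := (Real.rpow_logb two_pos (by norm_num) (by linarith)).symm
    _ ≤ x ^ Real.logb 2 A := Real.rpow_le_rpow zero_le_two hx hL

/-- polynomial sample complexity for non-negligible
reference probabilities. -/
theorem poly_complexity_nonnegligible_reference :
    ∀ α : ℕ, 2 ≤ α → ∀ c : ℝ, 0 < c →
    ∀ δ : ℝ, δ ∈ Set.Ioo (0 : ℝ) (1/2) →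
    ∃ C : ℝ, 0 < C ∧
      ∀ k : ℕ, 2 ≤ k →
      ∀ q : Fin k → ℝ, IsDist q → (∀ i, (k : ℝ) ^ (-c) ≤ q i) →
      ∀ n : ℕ, (k : ℝ) ^ C ≤ (n : ℝ) →
      ∃ f : (Fin n → Fin k) → ℝ, IsEstimator n (α : ℝ) δ (0.3) q f := by
  intro α hα c hc δ ⟨hδ0, hδ1⟩
  have hα' : (2 : ℝ) ≤ α := by exact_mod_cast hα
  have hA : 1 ≤ 4 * (α / δ) ^ 2 := by
    rw [div_pow, mul_div_assoc', le_div_iff₀ (by positivity)]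
    nlinarith
  refine ⟨2 * c * (α - 1) + 1 + Real.logb 2 (4 * (α / δ) ^ 2),
    by have := Real.logb_nonneg one_lt_two hA; nlinarith, ?_⟩
  intro k hk q hq hqmin n hn
  have hk0 : (0 : ℝ) < k := by positivity
  have hq0 : ∀ i, 0 < q i := fun i => (Real.rpow_pos_of_pos hk0 _).trans_le (hqmin i)
  set M := (k : ℝ) ^ (c * (α - 1))
  have hM : ∀ i, q i ^ (1 - (α : ℝ)) ≤ M := fun i => by
    calc q i ^ (1 - (α : ℝ)) ≤ ((k : ℝ) ^ (-c)) ^ (1 - (α : ℝ)) :=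
          Real.rpow_le_rpow_of_nonpos (Real.rpow_pos_of_pos hk0 _) (hqmin i) (by linarith)
      _ = M := by rw [← Real.rpow_mul hk0.le, neg_mul_comm, neg_sub]
  refine ⟨_, isEstimator_renyiDiv_empirical hα hq0 hq.2 hM hδ0 (le_trans ?_ hn)⟩
  calc 4 * k * (α * M / δ) ^ 2 = 4 * (α / δ) ^ 2 * (k : ℝ) ^ (2 * c * (α - 1) + 1) := by
        have hM2 : M ^ 2 = (k : ℝ) ^ (2 * c * (α - 1)) := by
          rw [← Real.rpow_natCast, ← Real.rpow_mul hk0.le]; ring_nf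
        rw [Real.rpow_add_one hk0.ne', ← hM2]; ring
    _ ≤ _ := mul_rpow_le_rpow_add_logb hA (by exact_mod_cast hk) _
end

section
/- Fix a real α > 1 and a constant c > 0, and set d = c(α−1)/α. There exist constants δ₀ > 0, c' > 0 and k₀ ∈ ℕ, depending only on α and c, such that for every k ≥ k₀ the following holds. Let q be the distribution on A = {1,…,k} with q_1 = k^{−c} and q_i = (1 − k^{−c})/(k−1) for i ≥ 2. Then any function f : A^n → ℝ that is a (δ₀, 1/3)-estimator of D_α(·‖q) on the set of all distributions on A must satisfy n ≥ c' · k^{d}. In particular, if c = ω(1) as a function of k, the sample complexity is super-polynomial in k. -/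
/-!
Le Cam's two-point method. Let `u = k^(-c)` be the reference mass `q₁` and put `t = k^(-d)`,
so that `t^α u^(1-α) = 1`. Spikes (mass `a` on the first letter, the rest uniform) have a Rényi
divergence independent of `k`, namely the binary one; hence the spike `p₀` with `a = 0` has
divergence `-log (1 - u) → 0` from `q`, while the spike `p₁` with `a = t` has divergence at least
`log (1 + 2^(-α)) / (α - 1)`, since its first-letter term alone contributes `t^α u^(1-α) = 1`.
Their `ℓ¹` distance is only `2t`, so the `n`-fold products are `2nt`-close in total variation,
and an estimator separating them with error `1/3` forces `1/3 < 2nt = 2n k^(-d)`.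
-/

open Finset Real

open Filter Topology

section ProductDistribution

variable {ι : Type*} [Fintype ι]

theorem Fin.sum_pi_succ {n : ℕ} (g : (Fin (n + 1) → ι) → ℝ) :
    ∑ x, g x = ∑ i, ∑ y : Fin n → ι, g (Fin.cons i y) := by
  rw [← (Fin.consEquiv fun _ => ι).sum_comp, Fintype.sum_prod_type]
  rfl

theorem sum_abs_prod_sub_prod_le {p r : ι → ℝ} (hp : ∀ i, 0 ≤ p i) (hr : ∀ i, 0 ≤ r i)
    (hp1 : ∑ i, p i = 1) (hr1 : ∑ i, r i = 1) (n : ℕ) :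
    ∑ x : Fin n → ι, |∏ j, p (x j) - ∏ j, r (x j)| ≤ n * ∑ i, |p i - r i| := by
  induction n with
  | zero => simp
  | succ n ih =>
    have hstep : ∀ i (P R : ℝ), 0 ≤ P →
        |p i * P - r i * R| ≤ |p i - r i| * P + r i * |P - R| := fun i P R hP =>
      calc |p i * P - r i * R| = |(p i - r i) * P + r i * (P - R)| := by ring_nf
        _ ≤ |p i - r i| * P + r i * |P - R| := by
          simpa only [abs_mul, abs_of_nonneg hP, abs_of_nonneg (hr i)] using
            abs_add_le ((p i - r i) * P) (r i * (P - R))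
    rw [Fin.sum_pi_succ]
    simp only [Fin.prod_univ_succ, Fin.cons_zero, Fin.cons_succ]
    calc ∑ i, ∑ y : Fin n → ι, |p i * ∏ j, p (y j) - r i * ∏ j, r (y j)|
        ≤ ∑ i, ∑ y : Fin n → ι,
            (|p i - r i| * ∏ j, p (y j) + r i * |∏ j, p (y j) - ∏ j, r (y j)|) := by
          gcongr with i _ y _
          exact hstep i _ _ (prod_nonneg fun j _ => hp _)
      _ = (∑ i, |p i - r i|) * (∑ i, p i) ^ n
            + (∑ i, r i) * ∑ y : Fin n → ι, |∏ j, p (y j) - ∏ j, r (y j)| := by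
          simp only [sum_add_distrib, ← mul_sum, ← sum_mul, Fintype.sum_pow]
      _ ≤ (n + 1 : ℕ) * ∑ i, |p i - r i| := by
          rw [hp1, hr1, one_pow]
          push_cast
          linarith

end ProductDistribution

section IidProb

variable {k n : ℕ}

theorem iidProb_compl {p : Fin k → ℝ} (hp1 : ∑ i, p i = 1) (E : Set (Fin n → Fin k)) :
    iidProb n p Eᶜ = 1 - iidProb n p E := by
  simp only [iidProb, Set.indicator_compl, Pi.sub_apply, sum_sub_distrib, ← Fintype.sum_pow,
    hp1, one_pow]

theorem iidProb_mono {p : Fin k → ℝ} (hp : ∀ i, 0 ≤ p i) {E F : Set (Fin n → Fin k)}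
    (hEF : E ⊆ F) : iidProb n p E ≤ iidProb n p F :=
  sum_le_sum fun x _ =>
    Set.indicator_le_indicator_of_subset hEF (fun _ => prod_nonneg fun _ _ => hp _) x

theorem iidProb_sub_iidProb_le {p r : Fin k → ℝ} (hp : IsDist p) (hr : IsDist r)
    (E : Set (Fin n → Fin k)) :
    iidProb n p E - iidProb n r E ≤ n * ∑ i, |p i - r i| := by
  refine le_trans ?_ (sum_abs_prod_sub_prod_le hp.1 hr.1 hp.2 hr.2 n)
  rw [iidProb, iidProb, ← sum_sub_distrib]
  refine sum_le_sum fun x _ => ?_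
  by_cases hx : x ∈ E <;> simp [hx, le_abs_self]

end IidProb

theorem IsEstimator.two_point_lower_bound {k n : ℕ} {α δ ε : ℝ} {q : Fin k → ℝ}
    {f : (Fin n → Fin k) → ℝ} (hf : IsEstimator n α δ ε q f) {p r : Fin k → ℝ}
    (hp : IsDist p) (hr : IsDist r)
    (hsep : 2 * δ < |renyiDiv α p q - renyiDiv α r q|) :
    1 - 2 * ε < n * ∑ i, |p i - r i| := by
  set A : Set (Fin n → Fin k) := {x | δ < |f x - renyiDiv α p q|}
  have hAc : Aᶜ ⊆ {x | δ < |f x - renyiDiv α r q|} := by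
    intro x hx
    simp only [A, Set.mem_compl_iff, Set.mem_ofPred_eq, not_lt] at hx ⊢
    have := abs_sub_le (renyiDiv α p q) (f x) (renyiDiv α r q)
    rw [abs_sub_comm (renyiDiv α p q) (f x)] at this
    linarith
  have hpA := iidProb_compl hp.2 A
  have hrA := iidProb_mono hr.1 hAc
  have hdiff := iidProb_sub_iidProb_le hp hr Aᶜ
  linarith [hf p hp, hf r hr]

section Spike

noncomputable def spike (k : ℕ) (a : ℝ) : Fin k → ℝ :=
  fun i => if (i : ℕ) = 0 then a else (1 - a) / ((k : ℝ) - 1)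

theorem sum_ite_val_eq_zero {m : ℕ} (a b : ℝ) :
    ∑ i : Fin (m + 1), (if (i : ℕ) = 0 then a else b) = a + m * b := by
  simp [Fin.sum_univ_succ]

variable {k : ℕ}

theorem isDist_spike (hk : 1 < k) {a : ℝ} (ha0 : 0 ≤ a) (ha1 : a ≤ 1) : IsDist (spike k a) := by
  obtain ⟨m, rfl⟩ : ∃ m, k = m + 1 := ⟨k - 1, by omega⟩
  have hm : (0 : ℝ) < m := by exact_mod_cast Nat.succ_lt_succ_iff.mp hk
  refine ⟨fun i => ?_, ?_⟩
  · unfold spike; split_ifs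
    · exact ha0
    · exact div_nonneg (by linarith) (by push_cast; linarith)
  · simp only [spike, sum_ite_val_eq_zero, Nat.cast_add, Nat.cast_one, add_sub_cancel_right]
    field_simp
    ring

theorem sum_abs_spike_sub_spike (hk : 1 < k) (a b : ℝ) :
    ∑ i, |spike k a i - spike k b i| = 2 * |a - b| := by
  obtain ⟨m, rfl⟩ : ∃ m, k = m + 1 := ⟨k - 1, by omega⟩
  have hm : (0 : ℝ) < m := by exact_mod_cast Nat.succ_lt_succ_iff.mp hk
  have hterm : ∀ i : Fin (m + 1), |spike (m + 1) a i - spike (m + 1) b i|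
      = if (i : ℕ) = 0 then |a - b| else |a - b| / m := by
    intro i
    unfold spike; split_ifs
    · rfl
    · push_cast
      rw [add_sub_cancel_right, ← sub_div, abs_div, abs_of_pos hm, abs_sub_comm]
      ring_nf
  rw [sum_congr rfl fun i _ => hterm i, sum_ite_val_eq_zero]
  field_simp
  ring

theorem renyiDiv_spike (hk : 1 < k) (α : ℝ) {a b : ℝ} (ha : a ≤ 1) (hb : b ≤ 1) :
    renyiDiv α (spike k a) (spike k b)
      = 1 / (α - 1) * log (a ^ α * b ^ (1 - α) + (1 - a) ^ α * (1 - b) ^ (1 - α)) := by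
  obtain ⟨m, rfl⟩ : ∃ m, k = m + 1 := ⟨k - 1, by omega⟩
  have hm : (0 : ℝ) < m := by exact_mod_cast Nat.succ_lt_succ_iff.mp hk
  have hmm : (m : ℝ) ^ α * (m : ℝ) ^ (1 - α) = m := by
    rw [← rpow_add hm, add_sub_cancel, rpow_one]
  have hterm : ∀ i : Fin (m + 1), spike (m + 1) a i ^ α * spike (m + 1) b i ^ (1 - α)
      = if (i : ℕ) = 0 then a ^ α * b ^ (1 - α)
        else (1 - a) ^ α * (1 - b) ^ (1 - α) / m := by
    intro i
    unfold spike; split_ifs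
    · rfl
    · push_cast
      rw [add_sub_cancel_right, div_rpow (by linarith) hm.le, div_rpow (by linarith) hm.le,
        div_mul_div_comm, hmm]
  rw [renyiDiv, sum_congr rfl fun i _ => hterm i, sum_ite_val_eq_zero, mul_div_cancel₀ _ hm.ne']

theorem renyiDiv_spike_zero (hk : 1 < k) {α : ℝ} (hα : 1 < α) {u : ℝ} (hu : u < 1) :
    renyiDiv α (spike k 0) (spike k u) = -log (1 - u) := by
  rw [renyiDiv_spike hk α zero_le_one hu.le, zero_rpow (by linarith), zero_mul, zero_add,
    sub_zero, one_rpow, one_mul, log_rpow (by linarith)]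
  field_simp [show α - 1 ≠ 0 by linarith]
  ring

theorem le_renyiDiv_spike (hk : 1 < k) {α : ℝ} (hα : 1 < α) {t u : ℝ} (ht : t ≤ 1 / 2)
    (hu0 : 0 ≤ u) (hu1 : u < 1) (htu : 1 ≤ t ^ α * u ^ (1 - α)) :
    1 / (α - 1) * log (1 + 2 ^ (-α)) ≤ renyiDiv α (spike k t) (spike k u) := by
  rw [renyiDiv_spike hk α (by linarith) hu1.le]
  have hhalf : (2 : ℝ) ^ (-α) ≤ (1 - t) ^ α := by
    rw [rpow_neg zero_le_two, ← inv_rpow zero_le_two]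
    exact rpow_le_rpow (by norm_num) (by linarith) (by linarith)
  have hone : 1 ≤ (1 - u) ^ (1 - α) :=
    one_le_rpow_of_pos_of_le_one_of_nonpos (by linarith) (by linarith) (by linarith)
  have hprod : (2 : ℝ) ^ (-α) ≤ (1 - t) ^ α * (1 - u) ^ (1 - α) := by
    nlinarith [rpow_nonneg (show (0 : ℝ) ≤ 1 - t by linarith) α]
  have := sub_pos.mpr hα
  gcongr

end Spike

theorem rpow_neg_rpow_mul_rpow_neg_rpow_one_sub {x : ℝ} (hx : 0 < x) (c : ℝ) {α : ℝ}
    (hα : α ≠ 0) : (x ^ (-(c * (α - 1) / α))) ^ α * (x ^ (-c)) ^ (1 - α) = 1 := by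
  have hexp : -(c * (α - 1) / α) * α + -c * (1 - α) = 0 := by
    field_simp
    ring
  rw [← rpow_mul hx.le, ← rpow_mul hx.le, ← rpow_add hx, hexp, rpow_zero]

theorem tendsto_natCast_rpow_neg {c : ℝ} (hc : 0 < c) :
    Tendsto (fun k : ℕ => (k : ℝ) ^ (-c)) atTop (𝓝 0) :=
  (tendsto_rpow_neg_atTop hc).comp tendsto_natCast_atTop_atTop

theorem tendsto_neg_log_one_sub_natCast_rpow_neg {c : ℝ} (hc : 0 < c) :
    Tendsto (fun k : ℕ => -log (1 - (k : ℝ) ^ (-c))) atTop (𝓝 0) := by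
  have hcont : ContinuousAt (fun u : ℝ => -log (1 - u)) 0 :=
    ((continuous_const.sub continuous_id).continuousAt.log (by norm_num)).neg
  simpa [Function.comp_def] using hcont.tendsto.comp (tendsto_natCast_rpow_neg hc)

/-- super-polynomial sample complexity blow-up for
negligible reference probabilities. -/
theorem negligible_mass_blowup (α c : ℝ) (hα : 1 < α) (hc : 0 < c) :
    ∃ δ₀ c' : ℝ, ∃ k₀ : ℕ, 0 < δ₀ ∧ 0 < c' ∧
      ∀ k : ℕ, k₀ ≤ k →
      ∀ (n : ℕ) (f : (Fin n → Fin k) → ℝ),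
        IsEstimator n α δ₀ (1/3)
          (fun i => if (i : ℕ) = 0 then (k : ℝ) ^ (-c)
                    else (1 - (k : ℝ) ^ (-c)) / ((k : ℝ) - 1)) f →
        c' * (k : ℝ) ^ (c * (α - 1) / α) ≤ (n : ℝ) := by
  set G := 1 / (α - 1) * log (1 + 2 ^ (-α))
  have hG : 0 < G := by
    have := sub_pos.mpr hα
    exact mul_pos (by positivity) (log_pos (by linarith [rpow_pos_of_pos two_pos (-α)]))
  have hd : 0 < c * (α - 1) / α := by apply div_pos <;> nlinarith
  have hlarge : ∀ᶠ k : ℕ in atTop, 1 < k ∧ (k : ℝ) ^ (-(c * (α - 1) / α)) ≤ 1 / 2 ∧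
      (k : ℝ) ^ (-c) < 1 ∧ -log (1 - (k : ℝ) ^ (-c)) < G / 2 :=
    (eventually_gt_atTop 1).and <|
      (tendsto_natCast_rpow_neg hd).eventually (ge_mem_nhds one_half_pos) |>.and <|
      (tendsto_natCast_rpow_neg hc).eventually (gt_mem_nhds one_pos) |>.and <|
      (tendsto_neg_log_one_sub_natCast_rpow_neg hc).eventually (gt_mem_nhds (half_pos hG))
  obtain ⟨k₀, hk₀⟩ := eventually_atTop.mp hlarge
  refine ⟨G / 4, 1 / 6, k₀, by positivity, by norm_num, fun k hk n f hf => ?_⟩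
  obtain ⟨hk1, ht, hu1, hu⟩ := hk₀ k hk
  have hK : (0 : ℝ) < k := by exact_mod_cast zero_lt_one.trans hk1
  set t := (k : ℝ) ^ (-(c * (α - 1) / α))
  set u := (k : ℝ) ^ (-c)
  have hfar := le_renyiDiv_spike hk1 hα ht (by positivity) hu1
    (rpow_neg_rpow_mul_rpow_neg_rpow_one_sub hK c (by positivity)).ge
  have hsep : 2 * (G / 4) <
      |renyiDiv α (spike k 0) (spike k u) - renyiDiv α (spike k t) (spike k u)| := by
    rw [renyiDiv_spike_zero hk1 hα hu1, abs_sub_comm, abs_of_pos (by linarith)]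
    linarith
  have hn := hf.two_point_lower_bound (isDist_spike hk1 le_rfl zero_le_one)
    (isDist_spike hk1 (by positivity) (by linarith)) hsep
  rw [sum_abs_spike_sub_spike hk1, zero_sub, abs_neg, abs_of_pos (by positivity)] at hn
  have hkt : (k : ℝ) ^ (c * (α - 1) / α) * t = 1 := by
    rw [← rpow_add hK, add_neg_cancel, rpow_zero]
  nlinarith [rpow_pos_of_pos hK (c * (α - 1) / α)]
end

section
/- Let λ > 0, let N be a Poisson random variable with mean λ, and let a ≥ 1 be an integer. Then E[N^{a̲}] = λ^a and Var[N^{a̲}] ≤ λ^a·((λ+a)^a − λ^a), where N^{a̲} = N(N−1)···(N−a+1) denotes the falling power. -/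
/-!
The Poisson weights satisfy `p(n + a) · (n + a)^{a̲} = λ^a · p(n)`, so
`E[N^{a̲} g(N)] = λ^a E[g(N + a)]` for every `g`. With `g = 1` this is the mean; with
`g(j) = j^{a̲}` it gives `E[(N^{a̲})²] = λ^a E[(N + a)^{a̲}]`. Vandermonde's identity for
falling factorials and the mean formula give `E[(N + a)^{a̲}] = Σ_k C(a,k) λ^k a^{(a-k)̲}`,
which is at most `(λ + a)^a` by the binomial theorem and `a^{(a-k)̲} ≤ a^{a-k}`.
-/

open Real

/-- Probability mass function of a Poisson random variable with mean `l`. -/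
noncomputable def poissonPMF (l : ℝ) (j : ℕ) : ℝ :=
  Real.exp (-l) * l ^ j / (Nat.factorial j)

open Finset

theorem Nat.descFactorial_add (m n k : ℕ) :
    (m + n).descFactorial k =
      ∑ ij ∈ antidiagonal k, k.choose ij.1 * m.descFactorial ij.1 * n.descFactorial ij.2 := by
  rw [descFactorial_eq_factorial_mul_choose, add_choose_eq, mul_sum]
  refine sum_congr rfl fun ij hij => ?_
  rw [HasAntidiagonal.mem_antidiagonal] at hij
  rw [descFactorial_eq_factorial_mul_choose m, descFactorial_eq_factorial_mul_choose n, ← hij,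
    ← add_choose_mul_factorial_mul_factorial, choose_symm_add]
  ring

theorem hasSum_poissonPMF (l : ℝ) : HasSum (poissonPMF l) 1 := by
  have hexp : HasSum (fun j => l ^ j / j.factorial) (exp l) := by
    rw [exp_eq_exp_ℝ]
    exact NormedSpace.expSeries_div_hasSum_exp l
  have hpmf : poissonPMF l = fun j => exp (-l) * (l ^ j / j.factorial) :=
    funext fun j => mul_div_assoc ..
  rw [hpmf, ← exp_zero, ← neg_add_cancel l, exp_add]
  exact hexp.mul_left (exp (-l))

theorem poissonPMF_add_mul_descFactorial (l : ℝ) (n a : ℕ) :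
    poissonPMF l (n + a) * (n + a).descFactorial a = l ^ a * poissonPMF l n := by
  have hfac : ((n + a).descFactorial a : ℝ) * n.factorial = (n + a).factorial := by
    have h := Nat.factorial_mul_descFactorial (Nat.le_add_left a n)
    rw [Nat.add_sub_cancel, mul_comm] at h
    exact_mod_cast h
  rw [poissonPMF, poissonPMF, pow_add, ← hfac]
  field_simp

theorem HasSum.poissonPMF_mul_descFactorial_mul {l s : ℝ} {a : ℕ} {g : ℕ → ℝ}
    (h : HasSum (fun n => poissonPMF l n * g (n + a)) s) :
    HasSum (fun j => poissonPMF l j * (j.descFactorial a * g j)) (l ^ a * s) := by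
  refine (Function.Injective.hasSum_iff (add_left_injective a) fun j hj => ?_).1 ?_
  · have hja : j < a := by
      by_contra! haj
      exact hj ⟨j - a, Nat.sub_add_cancel haj⟩
    simp [Nat.descFactorial_of_lt hja]
  · have hshift (n : ℕ) : poissonPMF l (n + a) * ((n + a).descFactorial a * g (n + a)) =
        l ^ a * (poissonPMF l n * g (n + a)) := by
      rw [← mul_assoc, poissonPMF_add_mul_descFactorial, mul_assoc]
    simpa only [Function.comp_def, hshift] using h.mul_left (l ^ a)

theorem hasSum_poissonPMF_mul_descFactorial (l : ℝ) (a : ℕ) :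
    HasSum (fun j => poissonPMF l j * j.descFactorial a) (l ^ a) := by
  have h : HasSum (fun n => poissonPMF l n * 1) 1 := by
    simpa only [mul_one] using hasSum_poissonPMF l
  simpa only [mul_one] using h.poissonPMF_mul_descFactorial_mul (g := fun _ => 1) (a := a)

theorem hasSum_poissonPMF_mul_add_descFactorial (l : ℝ) (m k : ℕ) :
    HasSum (fun n => poissonPMF l n * (n + m).descFactorial k)
      (∑ ij ∈ antidiagonal k, k.choose ij.1 * l ^ ij.1 * m.descFactorial ij.2) := by
  simp only [Nat.descFactorial_add, Nat.cast_sum, Nat.cast_mul, mul_sum]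
  refine hasSum_sum fun ij _ => ?_
  simpa only [mul_comm, mul_assoc, mul_left_comm] using
    (hasSum_poissonPMF_mul_descFactorial l ij.1).mul_left
      (k.choose ij.1 * (m.descFactorial ij.2 : ℝ))

theorem sum_choose_mul_pow_mul_descFactorial_le {l : ℝ} (hl : 0 ≤ l) (m k : ℕ) :
    ∑ ij ∈ antidiagonal k, k.choose ij.1 * l ^ ij.1 * (m.descFactorial ij.2 : ℝ) ≤
      (l + m) ^ k := by
  rw [(Commute.all _ _).add_pow']
  refine sum_le_sum fun ij _ => ?_
  rw [nsmul_eq_mul, ← mul_assoc]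
  gcongr
  exact_mod_cast Nat.descFactorial_le_pow m ij.2

theorem poisson_fallingPower_mean_variance_general (l : ℝ) (hl : 0 < l)
    (a : ℕ) :
    (∑' j : ℕ, poissonPMF l j * (j.descFactorial a : ℝ)) = l ^ a ∧
    (∑' j : ℕ, poissonPMF l j * ((j.descFactorial a : ℝ)) ^ 2) -
        (∑' j : ℕ, poissonPMF l j * (j.descFactorial a : ℝ)) ^ 2
      ≤ l ^ a * ((l + a) ^ a - l ^ a) := by
  have hmean := (hasSum_poissonPMF_mul_descFactorial l a).tsum_eq
  have hsecond := (hasSum_poissonPMF_mul_add_descFactorial l a a).poissonPMF_mul_descFactorial_mul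
    (g := fun j => (j.descFactorial a : ℝ))
  simp only [← sq] at hsecond
  refine ⟨hmean, ?_⟩
  rw [hsecond.tsum_eq, hmean, sq, ← mul_sub]
  gcongr
  exact sum_choose_mul_pow_mul_descFactorial_le hl.le a a

/-- mean and variance bound for falling powers of a Poisson
random variable. -/
theorem poisson_fallingPower_mean_variance (l : ℝ) (hl : 0 < l)
    (a : ℕ) (ha : 1 ≤ a) :
    (∑' j : ℕ, poissonPMF l j * (j.descFactorial a : ℝ)) = l ^ a ∧
    (∑' j : ℕ, poissonPMF l j * ((j.descFactorial a : ℝ)) ^ 2) -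
        (∑' j : ℕ, poissonPMF l j * (j.descFactorial a : ℝ)) ^ 2
      ≤ l ^ a * ((l + a) ^ a - l ^ a) :=
  poisson_fallingPower_mean_variance_general l hl a
end

section
/- Let α ≥ 2 be an integer, let r be an integer with 0 ≤ r ≤ α−1, and let p be a probability distribution on a set of k symbols. Then Σ_{i=1}^k p_i^{α+r} ≤ k^{(α−1)(α−r)/α} · (Σ_{i=1}^k p_i^α)². -/
open Finset Real

/-!
Bound each `p i ^ r` by `S ^ (r / α)`, where `S = ∑ i, p i ^ α`, so that the left side is at most
`S ^ (1 + r / α)`. The power-mean inequality gives `1 ≤ k ^ (α - 1) * S`, i.e. `S⁻¹ ≤ k ^ (α - 1)`,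
and raising this to the nonnegative power `1 - r / α` trades the excess `S ^ (r / α - 1)` for the
power of `k`.
-/

theorem sum_pow_add_le_rpow_one_add {ι : Type*} (s : Finset ι) {f : ι → ℝ}
    (hf : ∀ i ∈ s, 0 ≤ f i) {a : ℕ} (ha : a ≠ 0) (r : ℕ) :
    ∑ i ∈ s, f i ^ (a + r) ≤ (∑ i ∈ s, f i ^ a) ^ (1 + (r : ℝ) / a) := by
  have hS : 0 ≤ ∑ i ∈ s, f i ^ a := sum_nonneg fun i hi => pow_nonneg (hf i hi) a
  rw [rpow_one_add' hS (by positivity), sum_mul]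
  refine sum_le_sum fun i hi => ?_
  rw [pow_add]
  refine mul_le_mul_of_nonneg_left ?_ (pow_nonneg (hf i hi) a)
  calc f i ^ r = (f i ^ a) ^ ((r : ℝ) / a) := by
        rw [← rpow_natCast_mul (hf i hi), mul_div_cancel₀ _ (Nat.cast_ne_zero.2 ha),
          rpow_natCast]
    _ ≤ (∑ j ∈ s, f j ^ a) ^ ((r : ℝ) / a) :=
        rpow_le_rpow (pow_nonneg (hf i hi) a)
          (single_le_sum (fun j hj => pow_nonneg (hf j hj) a) hi) (by positivity)

theorem rpow_one_add_le_rpow_mul_sq {S M t : ℝ} (hS : 0 ≤ S) (hMS : 1 ≤ M * S) (ht : t ≤ 1) :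
    S ^ (1 + t) ≤ M ^ (1 - t) * S ^ 2 := by
  have hS_pos : 0 < S := hS.lt_of_ne (by rintro rfl; norm_num at hMS)
  have hS_inv : S⁻¹ ≤ M := (inv_le_iff_one_le_mul₀ hS_pos).2 hMS
  calc S ^ (1 + t) = S⁻¹ ^ (1 - t) * S ^ 2 := by
        rw [inv_rpow hS, ← rpow_neg hS, ← rpow_natCast, ← rpow_add hS_pos]
        congr 1
        push_cast
        ring
    _ ≤ M ^ (1 - t) * S ^ 2 := by gcongr

/-- power sum comparison inequality for probability
distributions on `k` symbols. -/
theorem power_sum_ratio_bound (α r : ℕ) (hα : 2 ≤ α) (hr : r ≤ α - 1)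
    (k : ℕ) (p : Fin k → ℝ) (hp : (∀ i, 0 ≤ p i) ∧ ∑ i, p i = 1) :
    ∑ i, p i ^ (α + r)
      ≤ (k : ℝ) ^ (((α : ℝ) - 1) * ((α : ℝ) - r) / (α : ℝ)) *
        (∑ i, p i ^ α) ^ 2 := by
  obtain ⟨hp_nonneg, hp_sum⟩ := hp
  have hα_pos : (0 : ℝ) < α := by exact_mod_cast (by omega : 0 < α)
  have hr_le : (r : ℝ) / α ≤ 1 := (div_le_one hα_pos).2 (by exact_mod_cast (by omega : r ≤ α))
  have power_mean : 1 ≤ ((k : ℝ) ^ (α - 1)) * ∑ i, p i ^ α := by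
    simpa [hp_sum, Nat.sub_add_cancel (by omega : 1 ≤ α)] using
      pow_sum_le_card_mul_sum_pow (s := univ) (fun i _ => hp_nonneg i) (α - 1)
  calc ∑ i, p i ^ (α + r) ≤ (∑ i, p i ^ α) ^ (1 + (r : ℝ) / α) :=
        sum_pow_add_le_rpow_one_add _ (fun i _ => hp_nonneg i) (by omega) r
    _ ≤ ((k : ℝ) ^ (α - 1)) ^ (1 - (r : ℝ) / α) * (∑ i, p i ^ α) ^ 2 :=
        rpow_one_add_le_rpow_mul_sq (sum_nonneg fun i _ => pow_nonneg (hp_nonneg i) α)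
          power_mean hr_le
    _ = (k : ℝ) ^ (((α : ℝ) - 1) * ((α : ℝ) - r) / (α : ℝ)) * (∑ i, p i ^ α) ^ 2 := by
        rw [← rpow_natCast_mul k.cast_nonneg, Nat.cast_sub (by omega), Nat.cast_one]
        congr 2
        field_simp
end

section
/- Fix a real α with 1 < α ≤ 3. Let p, q be distributions on A = {1,…,k} with p_i > 0 and q_i > 0 for every i, and let δ_1,…,δ_k be reals, not all zero, with |δ_i| ≤ 1/2 for all i and Σ_i p_i δ_i = 0. Set δ = Σ_i p_i |δ_i| and define p'_i = p_i(1 + δ_i). Then p' is a probability distribution on A, d_TV(p, p') = δ/2, and M_α(p',q) ≥ M_α(p,q)·(1 + C₁·δ + C₂·δ²), where C₁ = α · (Σ_i δ_i p_i^α q_i^{1−α}) / (Σ_i p_i^α q_i^{1−α}) · δ^{−1} and C₂ = (α(α−1)/4) · (Σ_i δ_i² p_i^α q_i^{1−α}) / (Σ_i p_i^α q_i^{1−α}) · δ^{−2}. -/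
open Finset Real

/-- Divergence power sum `M_α(p,q)`. -/
noncomputable def divPowerSum {k : ℕ} (α : ℝ) (p q : Fin k → ℝ) : ℝ :=
  ∑ i, p i ^ α * q i ^ (1 - α)

/-- Total variation distance between two distributions on `Fin k`. -/
noncomputable def dTV {k : ℕ} (p p' : Fin k → ℝ) : ℝ :=
  (1/2) * ∑ i, |p i - p' i|

/-!
The pointwise inequality `(1 + x)^α ≥ 1 + α x + (α(α-1)/4) x²` for `|x| ≤ 1/2` and
`1 ≤ α ≤ 3` is multiplied by the weights `p_i^α q_i^{1-α}` and summed. It holds because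
`(1 + x)^α - α x - (α(α-1)/4) x²` is convex on `[-1/2, 1/2]` with a critical point at `0`:
its second derivative is `α(α-1) ((1 + x)^{α-2} - 1/2)`, and `(1 + x)^{α-2} ≥ 1/2` there
exactly because `-1 ≤ α - 2 ≤ 1`.
-/

lemma half_le_one_add_rpow_sub_two {α y : ℝ} (hα1 : 1 ≤ α) (hα3 : α ≤ 3) (hy : |y| ≤ 1/2) :
    1/2 ≤ (1 + y) ^ (α - 2) := by
  obtain ⟨hyl, hyr⟩ := abs_le.1 hy
  rcases le_or_gt 2 α with h2 | h2
  · calc (1/2 : ℝ) = (1/2) ^ (1 : ℝ) := (rpow_one _).symm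
      _ ≤ (1/2) ^ (α - 2) :=
        rpow_le_rpow_of_exponent_ge (by norm_num) (by norm_num) (by linarith)
      _ ≤ (1 + y) ^ (α - 2) := rpow_le_rpow (by norm_num) (by linarith) (by linarith)
  · calc (1/2 : ℝ) ≤ (3/2) ^ (-1 : ℝ) := by rw [rpow_neg_one]; norm_num
      _ ≤ (3/2) ^ (α - 2) := rpow_le_rpow_of_exponent_le (by norm_num) (by linarith)
      _ ≤ (1 + y) ^ (α - 2) :=
        rpow_le_rpow_of_nonpos (by linarith) (by linarith) (by linarith)

lemma hasDerivAt_one_add_rpow (α : ℝ) {y : ℝ} (hy : 0 < 1 + y) :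
    HasDerivAt (fun t : ℝ => (1 + t) ^ α) (α * (1 + y) ^ (α - 1)) y := by
  simpa using ((hasDerivAt_id y).const_add 1).rpow_const (p := α) (Or.inl hy.ne')

lemma one_add_mul_add_sq_le_one_add_rpow {α x : ℝ} (hα1 : 1 ≤ α) (hα3 : α ≤ 3)
    (hx : |x| ≤ 1/2) :
    1 + α * x + (α * (α - 1) / 4) * x ^ 2 ≤ (1 + x) ^ α := by
  set c := α * (α - 1) / 4
  let g : ℝ → ℝ := fun t => (1 + t) ^ α - α * t - c * t ^ 2
  let g' : ℝ → ℝ := fun t => α * (1 + t) ^ (α - 1) - α - 2 * c * t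
  let g'' : ℝ → ℝ := fun t => α * ((α - 1) * (1 + t) ^ (α - 2)) - 2 * c
  have hg : ∀ y, -1 < y → HasDerivAt g (g' y) y := fun y hy => by
    refine (((hasDerivAt_one_add_rpow α (by linarith)).sub
      ((hasDerivAt_id' y).const_mul α)).sub (((hasDerivAt_id' y).pow 2).const_mul c)).congr_deriv ?_
    simp only [g']; ring
  have hg' : ∀ y, -1 < y → HasDerivAt g' (g'' y) y := fun y hy => by
    refine ((((hasDerivAt_one_add_rpow (α - 1) (by linarith)).const_mul α).sub_const α).sub
      ((hasDerivAt_id' y).const_mul (2 * c))).congr_deriv ?_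
    simp only [g'']; ring_nf
  have hI : ∀ y ∈ interior (Set.Icc (-(1/2) : ℝ) (1/2)), |y| ≤ 1/2 ∧ -1 < y := fun y hy => by
    rw [interior_Icc] at hy
    exact ⟨abs_le.2 ⟨hy.1.le, hy.2.le⟩, by linarith [hy.1]⟩
  have hconvex : ConvexOn ℝ (Set.Icc (-(1/2)) (1/2)) g := by
    refine convexOn_of_hasDerivWithinAt2_nonneg (convex_Icc _ _)
      (fun y hy => (hg y (by linarith [hy.1])).continuousAt.continuousWithinAt)
      (fun y hy => (hg y (hI y hy).2).hasDerivWithinAt)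
      (fun y hy => (hg' y (hI y hy).2).hasDerivWithinAt) fun y hy => ?_
    have := mul_le_mul_of_nonneg_left (half_le_one_add_rpow_sub_two hα1 hα3 (hI y hy).1)
      (mul_nonneg (by linarith : 0 ≤ α) (by linarith : 0 ≤ α - 1))
    simp only [g'', c]; linarith
  have hmin : IsMinOn g (Set.Icc (-(1/2)) (1/2)) 0 := by
    refine hconvex.isMinOn_of_rightDeriv_eq_zero (by rw [interior_Icc]; norm_num) ?_
    simpa [g'] using (hg 0 (by norm_num)).hasDerivWithinAt.derivWithin
      (uniqueDiffWithinAt_Ioi 0)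
  have := hmin (abs_le.1 hx)
  norm_num [g] at this
  linarith

section Perturbation

variable {k : ℕ}

lemma isDist_perturb {p dv : Fin k → ℝ} (hp : IsDist p) (hdv : ∀ i, -1 ≤ dv i)
    (hmean : ∑ i, p i * dv i = 0) : IsDist (fun i => p i * (1 + dv i)) := by
  refine ⟨fun i => mul_nonneg (hp.1 i) (by linarith [hdv i]), ?_⟩
  simp only [mul_add, mul_one, sum_add_distrib, hp.2, hmean, add_zero]

lemma dTV_perturb {p : Fin k → ℝ} (hp : ∀ i, 0 ≤ p i) (dv : Fin k → ℝ) :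
    dTV p (fun i => p i * (1 + dv i)) = (∑ i, p i * |dv i|) / 2 := by
  have (i : Fin k) : |p i - p i * (1 + dv i)| = p i * |dv i| := by
    rw [show p i - p i * (1 + dv i) = -(p i * dv i) by ring, abs_neg, abs_mul,
      abs_of_nonneg (hp i)]
  simp only [dTV, this]
  ring

lemma sum_le_divPowerSum_perturb {α : ℝ} (hα1 : 1 ≤ α) (hα3 : α ≤ 3) {p q dv : Fin k → ℝ}
    (hp : ∀ i, 0 ≤ p i) (hq : ∀ i, 0 ≤ q i) (hdv : ∀ i, |dv i| ≤ 1/2) :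
    ∑ i, (1 + α * dv i + (α * (α - 1) / 4) * dv i ^ 2) * (p i ^ α * q i ^ (1 - α)) ≤
      divPowerSum α (fun i => p i * (1 + dv i)) q := by
  refine sum_le_sum fun i _ => ?_
  have h1dv : 0 ≤ 1 + dv i := by linarith [(abs_le.1 (hdv i)).1]
  calc _ ≤ (1 + dv i) ^ α * (p i ^ α * q i ^ (1 - α)) :=
        mul_le_mul_of_nonneg_right (one_add_mul_add_sq_le_one_add_rpow hα1 hα3 (hdv i))
          (mul_nonneg (rpow_nonneg (hp i) _) (rpow_nonneg (hq i) _))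
    _ = (p i * (1 + dv i)) ^ α * q i ^ (1 - α) := by rw [mul_rpow (hp i) h1dv]; ring

end Perturbation

theorem perturbation_powerSum_increase_general (α : ℝ) (hα1 : 1 < α) (hα3 : α ≤ 3)
    (k : ℕ) (p q : Fin k → ℝ) (hp : IsDist p)
    (hppos : ∀ i, 0 < p i) (hqpos : ∀ i, 0 < q i)
    (dv : Fin k → ℝ) (hdv0 : dv ≠ 0) (hdv : ∀ i, |dv i| ≤ 1/2)
    (hmean : ∑ i, p i * dv i = 0)
    (δ C₁ C₂ : ℝ) (hδ : δ = ∑ i, p i * |dv i|)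
    (hC₁ : C₁ = α * (∑ i, dv i * p i ^ α * q i ^ (1 - α)) /
                  (∑ i, p i ^ α * q i ^ (1 - α)) / δ)
    (hC₂ : C₂ = (α * (α - 1) / 4) * (∑ i, (dv i) ^ 2 * p i ^ α * q i ^ (1 - α)) /
                  (∑ i, p i ^ α * q i ^ (1 - α)) / δ ^ 2) :
    IsDist (fun i => p i * (1 + dv i)) ∧
    dTV p (fun i => p i * (1 + dv i)) = δ / 2 ∧
    divPowerSum α p q * (1 + C₁ * δ + C₂ * δ ^ 2)
      ≤ divPowerSum α (fun i => p i * (1 + dv i)) q := by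
  obtain ⟨i₀, hi₀⟩ := Function.ne_iff.1 hdv0
  have hδ0 : δ ≠ 0 := hδ ▸ (sum_pos' (fun i _ => mul_nonneg (hppos i).le (abs_nonneg _))
    ⟨i₀, mem_univ _, mul_pos (hppos i₀) (abs_pos.2 hi₀)⟩).ne'
  have hM0 : ∑ i, p i ^ α * q i ^ (1 - α) ≠ 0 := (sum_pos (fun i _ =>
    mul_pos (rpow_pos_of_pos (hppos i) _) (rpow_pos_of_pos (hqpos i) _)) ⟨i₀, mem_univ _⟩).ne'
  refine ⟨isDist_perturb hp (fun i => by linarith [(abs_le.1 (hdv i)).1]) hmean,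
    hδ ▸ dTV_perturb (fun i => (hppos i).le) dv, ?_⟩
  calc divPowerSum α p q * (1 + C₁ * δ + C₂ * δ ^ 2)
      = (∑ i, p i ^ α * q i ^ (1 - α)) + α * (∑ i, dv i * p i ^ α * q i ^ (1 - α)) +
          (α * (α - 1) / 4) * ∑ i, dv i ^ 2 * p i ^ α * q i ^ (1 - α) := by
        rw [hC₁, hC₂, divPowerSum]; field_simp
    _ = ∑ i, (1 + α * dv i + (α * (α - 1) / 4) * dv i ^ 2) * (p i ^ α * q i ^ (1 - α)) := by
        simp only [mul_sum, ← sum_add_distrib]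
        exact sum_congr rfl fun i _ => by ring
    _ ≤ _ := sum_le_divPowerSum_perturb hα1.le hα3 (fun i => (hppos i).le)
          (fun i => (hqpos i).le) hdv

/-- perturbing `p` by relative deviations `δᵢ` produces a
nearby distribution whose divergence power sum is noticeably larger. -/
theorem perturbation_powerSum_increase (α : ℝ) (hα1 : 1 < α) (hα3 : α ≤ 3)
    (k : ℕ) (p q : Fin k → ℝ) (hp : IsDist p) (hq : IsDist q)
    (hppos : ∀ i, 0 < p i) (hqpos : ∀ i, 0 < q i)
    (dv : Fin k → ℝ) (hdv0 : dv ≠ 0) (hdv : ∀ i, |dv i| ≤ 1/2)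
    (hmean : ∑ i, p i * dv i = 0)
    (δ C₁ C₂ : ℝ) (hδ : δ = ∑ i, p i * |dv i|)
    (hC₁ : C₁ = α * (∑ i, dv i * p i ^ α * q i ^ (1 - α)) /
                  (∑ i, p i ^ α * q i ^ (1 - α)) / δ)
    (hC₂ : C₂ = (α * (α - 1) / 4) * (∑ i, (dv i) ^ 2 * p i ^ α * q i ^ (1 - α)) /
                  (∑ i, p i ^ α * q i ^ (1 - α)) / δ ^ 2) :
    IsDist (fun i => p i * (1 + dv i)) ∧
    dTV p (fun i => p i * (1 + dv i)) = δ / 2 ∧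
    divPowerSum α p q * (1 + C₁ * δ + C₂ * δ ^ 2)
      ≤ divPowerSum α (fun i => p i * (1 + dv i)) q :=
  perturbation_powerSum_increase_general α hα1 hα3 k p q hp hppos hqpos dv hdv0 hdv hmean δ C₁ C₂ hδ
    hC₁ hC₂
end
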